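/- Let f(t,s,r)=γ(t)+sX(t)+rY(t) be a pseudo-non-degenerate two-ruled frontal in ℝ⁴ (normalized, with functions a,b₁,b₂,b₃ and b₄≡0, ω=ab₂+b₁−b₃'). Then: (i) λ(t,s,r)=b₃(t)+s+ra(t) is an identifier of singularities and η=∂_t−b₁∂_s−b₂∂_r is a null vector field, so the singular set is S(f)={(t,s,r): b₃(t)+s+ra(t)=0}, whose image under f is the image of the striction surface σ̃(t,k)=γ+(−ak−b₃)X+kY; (ii) if a'≠0, the second singular set S₂(f)={p∈S(f): η_p∈T_pS(f)} equals {(t,s,r): r=ω(t)/a'(t), s=−b₃(t)−a(t)ω(t)/a'(t)}, and f(S₂(f)) equals the image of the second striction curve σ₂(t)=γ̃(t)+(ω(t)(a(t)²+1)^{1/2}/a'(t))X̃(t), where γ̃=γ−b₃X and X̃=(−aX+Y)/|−aX+Y|. -/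

import Mathlib

open scoped Topology
open Filter

noncomputable section

/-- Ambient space `ℝ⁴`. -/
abbrev E4 := Fin 4 → ℝ

/-- The standard inner product on `ℝ⁴`. -/
def dot4 (u v : E4) : ℝ := ∑ i, u i * v i

/-- `det(u,v,w,x)` for four vectors of `ℝ⁴`. -/
def det4 (u v w x : E4) : ℝ := Matrix.det (Matrix.of ![u, v, w, x])

/-- The triple exterior (cross) product `u ∧ v ∧ w` in `ℝ⁴`. -/
def tcross (u v w : E4) : E4 := fun i => det4 (Pi.single i 1) u v w

/-- A point `p` is a singular point of `f` if `rank df_p < 3`. -/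
def IsSingAt (f : ℝ × ℝ × ℝ → E4) (p : ℝ × ℝ × ℝ) : Prop :=
  Module.finrank ℝ ↥(LinearMap.range (fderiv ℝ f p).toLinearMap) < 3

lemma det4_expand (u v w x : E4) : det4 u v w x =
    u 0*(v 1*(w 2*x 3-w 3*x 2)-v 2*(w 1*x 3-w 3*x 1)+v 3*(w 1*x 2-w 2*x 1))
  - u 1*(v 0*(w 2*x 3-w 3*x 2)-v 2*(w 0*x 3-w 3*x 0)+v 3*(w 0*x 2-w 2*x 0))
  + u 2*(v 0*(w 1*x 3-w 3*x 1)-v 1*(w 0*x 3-w 3*x 0)+v 3*(w 0*x 1-w 1*x 0))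
  - u 3*(v 0*(w 1*x 2-w 2*x 1)-v 1*(w 0*x 2-w 2*x 0)+v 2*(w 0*x 1-w 1*x 0)) := by
  simp [det4, Matrix.det_succ_row_zero, Fin.sum_univ_succ, Fin.succAbove]
  ring

lemma tcross_apply0 (u v w : E4) : tcross u v w 0 =
    u 1*(v 2*w 3-v 3*w 2)-u 2*(v 1*w 3-v 3*w 1)+u 3*(v 1*w 2-v 2*w 1) := by
  simp [tcross, det4_expand, Pi.single_apply]
lemma tcross_apply1 (u v w : E4) : tcross u v w 1 =
    -(u 0*(v 2*w 3-v 3*w 2)-u 2*(v 0*w 3-v 3*w 0)+u 3*(v 0*w 2-v 2*w 0)) := by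
  simp [tcross, det4_expand, Pi.single_apply]
lemma tcross_apply2 (u v w : E4) : tcross u v w 2 =
    u 0*(v 1*w 3-v 3*w 1)-u 1*(v 0*w 3-v 3*w 0)+u 3*(v 0*w 1-v 1*w 0) := by
  simp [tcross, det4_expand, Pi.single_apply]
lemma tcross_apply3 (u v w : E4) : tcross u v w 3 =
    -(u 0*(v 1*w 2-v 2*w 1)-u 1*(v 0*w 2-v 2*w 0)+u 2*(v 0*w 1-v 1*w 0)) := by
  simp [tcross, det4_expand, Pi.single_apply]

set_option maxHeartbeats 1000000 in
lemma gram_id (u v w : E4) : dot4 (tcross u v w) (tcross u v w) =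
    dot4 u u * (dot4 v v * dot4 w w - dot4 v w * dot4 v w)
  - dot4 u v * (dot4 u v * dot4 w w - dot4 v w * dot4 u w)
  + dot4 u w * (dot4 u v * dot4 v w - dot4 v v * dot4 u w) := by
  simp only [dot4, Fin.sum_univ_four, tcross_apply0, tcross_apply1, tcross_apply2, tcross_apply3]
  ring

set_option maxHeartbeats 1000000 in
lemma identifier_det (u v w : E4) (c1 c2 c3 : ℝ) :
    det4 (c1•u+c2•v+c3•w) u v (tcross u v w) =
      -c3 * dot4 (tcross u v w) (tcross u v w) := by
  simp only [dot4, Fin.sum_univ_four, det4_expand, tcross_apply0, tcross_apply1,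
    tcross_apply2, tcross_apply3, Pi.add_apply, Pi.smul_apply, smul_eq_mul]
  ring

section FD
open ContinuousLinearMap

def Pt : ℝ×ℝ×ℝ →L[ℝ] ℝ := fst ℝ ℝ (ℝ×ℝ)
def Ps : ℝ×ℝ×ℝ →L[ℝ] ℝ := (fst ℝ ℝ ℝ).comp (snd ℝ ℝ (ℝ×ℝ))
def Pr : ℝ×ℝ×ℝ →L[ℝ] ℝ := (snd ℝ ℝ ℝ).comp (snd ℝ ℝ (ℝ×ℝ))

lemma hasFDerivAt_ruled (γ X Y : ℝ → E4) (hγ : Differentiable ℝ γ) (hX : Differentiable ℝ X)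
    (hY : Differentiable ℝ Y) (t s r : ℝ) :
    HasFDerivAt (fun p : ℝ×ℝ×ℝ => γ p.1 + p.2.1 • X p.1 + p.2.2 • Y p.1)
      (((smulRight (1:ℝ→L[ℝ]ℝ) (deriv γ t)).comp Pt
        + (s • ((smulRight (1:ℝ→L[ℝ]ℝ) (deriv X t)).comp Pt) + Ps.smulRight (X t)))
        + (r • ((smulRight (1:ℝ→L[ℝ]ℝ) (deriv Y t)).comp Pt) + Pr.smulRight (Y t))) (t,s,r) := by
  have h1 : HasFDerivAt (fun p : ℝ×ℝ×ℝ => γ p.1)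
      ((smulRight (1:ℝ→L[ℝ]ℝ) (deriv γ t)).comp Pt) (t,s,r) :=
    HasFDerivAt.comp (t,s,r) (hγ t).hasDerivAt.hasFDerivAt hasFDerivAt_fst
  have hXc : HasFDerivAt (fun p : ℝ×ℝ×ℝ => X p.1)
      ((smulRight (1:ℝ→L[ℝ]ℝ) (deriv X t)).comp Pt) (t,s,r) :=
    HasFDerivAt.comp (t,s,r) (hX t).hasDerivAt.hasFDerivAt hasFDerivAt_fst
  have hYc : HasFDerivAt (fun p : ℝ×ℝ×ℝ => Y p.1)
      ((smulRight (1:ℝ→L[ℝ]ℝ) (deriv Y t)).comp Pt) (t,s,r) :=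
    HasFDerivAt.comp (t,s,r) (hY t).hasDerivAt.hasFDerivAt hasFDerivAt_fst
  have hs : HasFDerivAt (fun p : ℝ×ℝ×ℝ => p.2.1) Ps (t,s,r) := Ps.hasFDerivAt
  have hr : HasFDerivAt (fun p : ℝ×ℝ×ℝ => p.2.2) Pr (t,s,r) := Pr.hasFDerivAt
  exact (h1.add (hs.smul hXc)).add (hr.smul hYc)

lemma fderiv_ruled_apply (γ X Y : ℝ → E4) (hγ : Differentiable ℝ γ) (hX : Differentiable ℝ X)
    (hY : Differentiable ℝ Y) (t s r : ℝ) (v : ℝ×ℝ×ℝ) :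
    fderiv ℝ (fun p : ℝ×ℝ×ℝ => γ p.1 + p.2.1 • X p.1 + p.2.2 • Y p.1) (t,s,r) v
      = v.1 • (deriv γ t + s • deriv X t + r • deriv Y t) + v.2.1 • X t + v.2.2 • Y t := by
  rw [(hasFDerivAt_ruled γ X Y hγ hX hY t s r).fderiv]
  simp [Pt, Ps, Pr]
  module

lemma fderiv_lam_apply (a b₃ : ℝ → ℝ) (ha : Differentiable ℝ a) (hb₃ : Differentiable ℝ b₃)
    (t s r : ℝ) (v : ℝ×ℝ×ℝ) :
    fderiv ℝ (fun p : ℝ×ℝ×ℝ => b₃ p.1 + p.2.1 + p.2.2 * a p.1) (t,s,r) v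
      = (deriv b₃ t + r * deriv a t) * v.1 + v.2.1 + a t * v.2.2 := by
  have h1 : HasFDerivAt (fun p : ℝ×ℝ×ℝ => b₃ p.1) ((deriv b₃ t) • Pt) (t,s,r) :=
    HasDerivAt.comp_hasFDerivAt _ (hb₃ t).hasDerivAt hasFDerivAt_fst
  have h2 : HasFDerivAt (fun p : ℝ×ℝ×ℝ => a p.1) ((deriv a t) • Pt) (t,s,r) :=
    HasDerivAt.comp_hasFDerivAt _ (ha t).hasDerivAt hasFDerivAt_fst
  have hs : HasFDerivAt (fun p : ℝ×ℝ×ℝ => p.2.1) Ps (t,s,r) := Ps.hasFDerivAt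
  have hr : HasFDerivAt (fun p : ℝ×ℝ×ℝ => p.2.2) Pr (t,s,r) := Pr.hasFDerivAt
  rw [((h1.fun_add hs).fun_add (hr.fun_mul h2)).fderiv]
  simp [Pt, Ps, Pr]
  ring

lemma hasDerivAt_comp_proj (u : ℝ → E4) (hu : DifferentiableAt ℝ u t) (i : Fin 4) :
    HasDerivAt (fun t => u t i) (deriv u t i) t :=
  (ContinuousLinearMap.proj i : E4 →L[ℝ] ℝ).hasFDerivAt.comp_hasDerivAt t hu.hasDerivAt

lemma hasDerivAt_dot4 (u v : ℝ → E4) {t : ℝ} (hu : DifferentiableAt ℝ u t)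
    (hv : DifferentiableAt ℝ v t) :
    HasDerivAt (fun t => dot4 (u t) (v t))
      (dot4 (deriv u t) (v t) + dot4 (u t) (deriv v t)) t := by
  have h : ∀ i ∈ Finset.univ, HasDerivAt (fun t => u t i * v t i)
      (deriv u t i * v t i + u t i * deriv v t i) t := fun i _ =>
    (hasDerivAt_comp_proj u hu i).mul (hasDerivAt_comp_proj v hv i)
  have := HasDerivAt.fun_sum h
  simpa [dot4, Finset.sum_add_distrib] using this

lemma dot4_comm (u v : E4) : dot4 u v = dot4 v u := by simp [dot4, mul_comm]

end FD

lemma dot4_sq_comb (c : ℝ) (u v : E4) :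
    dot4 (c•u+v) (c•u+v) = c^2 * dot4 u u + 2*c*dot4 u v + dot4 v v := by
  simp [dot4, Fin.sum_univ_four]
  ring

/-- For a pseudo-non-degenerate two-ruled frontal (normalized, `b₄ ≡ 0`) with unit normal
`ν = X ∧ Y ∧ X'`: (i) `λ(t,s,r) = b₃(t)+s+ra(t)` is an identifier of singularities,
`η = ∂t − b₁∂s − b₂∂r` is a null vector field, the singular set is `{λ = 0}`, and its
image under `f` is the image of the striction surface `σ̃(t,k) = γ+(−ak−b₃)X+kY`;
(ii) if `a' ≠ 0` near `0`, the second singular set `{λ = ηλ = 0}` is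
`{r = ω/a', s = −b₃−aω/a'}` and its image under `f` is contained in the second
striction curve `σ₂(t) = γ̃ + (ω(a²+1)^{1/2}/a')X̃`. -/
theorem stmt12 (γ X Y : ℝ → E4) (a b₁ b₂ b₃ : ℝ → ℝ)
    (hγ : ContDiff ℝ (⊤ : ℕ∞) γ) (hX : ContDiff ℝ (⊤ : ℕ∞) X) (hY : ContDiff ℝ (⊤ : ℕ∞) Y)
    (ha : ContDiff ℝ (⊤ : ℕ∞) a) (hb₁ : ContDiff ℝ (⊤ : ℕ∞) b₁) (hb₂ : ContDiff ℝ (⊤ : ℕ∞) b₂)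
    (hb₃ : ContDiff ℝ (⊤ : ℕ∞) b₃)
    -- constrictively adapted director curves
    (hXunit : ∀ᶠ t in 𝓝 (0:ℝ), dot4 (X t) (X t) = 1)
    (hYunit : ∀ᶠ t in 𝓝 (0:ℝ), dot4 (Y t) (Y t) = 1)
    (hXY : ∀ᶠ t in 𝓝 (0:ℝ), dot4 (X t) (Y t) = 0)
    (hXY' : ∀ᶠ t in 𝓝 (0:ℝ), dot4 (X t) (deriv Y t) = 0)
    -- normalization
    (hspan : ∀ᶠ t in 𝓝 (0:ℝ), LinearIndependent ℝ ![X t, Y t, deriv X t])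
    (hX'unit : ∀ᶠ t in 𝓝 (0:ℝ), dot4 (deriv X t) (deriv X t) = 1)
    -- structure functions with b₄ ≡ 0 (two-ruled frontal)
    (hY' : ∀ᶠ t in 𝓝 (0:ℝ), deriv Y t = a t • deriv X t)
    (hγ' : ∀ᶠ t in 𝓝 (0:ℝ), deriv γ t =
      b₁ t • X t + b₂ t • Y t + b₃ t • deriv X t)
    (F : ℝ × ℝ × ℝ → E4)
    (hF : F = fun p => γ p.1 + p.2.1 • X p.1 + p.2.2 • Y p.1)
    (lam : ℝ × ℝ × ℝ → ℝ)
    (hlam : lam = fun p => b₃ p.1 + p.2.1 + p.2.2 * a p.1)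
    (ω : ℝ → ℝ) (hω : ω = fun t => a t * b₂ t + b₁ t - deriv b₃ t)
    (γtil Xtil : ℝ → E4)
    (hγtil : γtil = fun t => γ t - b₃ t • X t)
    (hXtil : Xtil = fun t =>
      (Real.sqrt (dot4 (-(a t) • X t + Y t) (-(a t) • X t + Y t)))⁻¹ •
        (-(a t) • X t + Y t)) :
    -- (i) lam is an identifier of singularities
    (∃ c : ℝ × ℝ × ℝ → ℝ, ContDiff ℝ (⊤ : ℕ∞) c ∧
      ∀ᶠ t in 𝓝 (0:ℝ), ∀ s r : ℝ, c (t,s,r) ≠ 0 ∧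
        lam (t,s,r) = c (t,s,r) *
          det4 (fderiv ℝ F (t,s,r) (1,0,0)) (fderiv ℝ F (t,s,r) (0,1,0))
            (fderiv ℝ F (t,s,r) (0,0,1)) (tcross (X t) (Y t) (deriv X t))) ∧
    -- η = ∂t − b₁∂s − b₂∂r is a null vector field
    (∀ᶠ t in 𝓝 (0:ℝ), ∀ s r : ℝ, lam (t,s,r) = 0 →
      LinearMap.ker (fderiv ℝ F (t,s,r)).toLinearMap =
        Submodule.span ℝ {((1, -b₁ t, -b₂ t) : ℝ × ℝ × ℝ)}) ∧
    -- the singular set is {lam = 0}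
    (∀ᶠ t in 𝓝 (0:ℝ), ∀ s r : ℝ, (IsSingAt F (t,s,r) ↔ lam (t,s,r) = 0)) ∧
    -- image of the singular set = image of the striction surface
    (∀ᶠ t in 𝓝 (0:ℝ),
      (∀ s r : ℝ, lam (t,s,r) = 0 → ∃ k : ℝ,
        F (t,s,r) = γ t + (-(a t) * k - b₃ t) • X t + k • Y t) ∧
      (∀ k : ℝ, ∃ s r : ℝ, lam (t,s,r) = 0 ∧
        γ t + (-(a t) * k - b₃ t) • X t + k • Y t = F (t,s,r))) ∧
    -- (ii) second singular set and second striction curve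
    ((∀ᶠ t in 𝓝 (0:ℝ), deriv a t ≠ 0) →
      ∀ᶠ t in 𝓝 (0:ℝ), ∀ s r : ℝ,
        ((lam (t,s,r) = 0 ∧ fderiv ℝ lam (t,s,r) (1, -b₁ t, -b₂ t) = 0) ↔
          (r = ω t / deriv a t ∧ s = -(b₃ t) - a t * ω t / deriv a t)) ∧
        ((lam (t,s,r) = 0 ∧ fderiv ℝ lam (t,s,r) (1, -b₁ t, -b₂ t) = 0) →
          F (t,s,r) =
            γtil t + ((ω t * Real.sqrt ((a t)^2 + 1)) / deriv a t) • Xtil t)) := by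
  subst hF hlam hω hγtil hXtil
  have hγd : Differentiable ℝ γ := hγ.differentiable (by simp)
  have hXd : Differentiable ℝ X := hX.differentiable (by simp)
  have hYd : Differentiable ℝ Y := hY.differentiable (by simp)
  have had : Differentiable ℝ a := ha.differentiable (by simp)
  have hb₃d : Differentiable ℝ b₃ := hb₃.differentiable (by simp)
  -- derived orthogonality
  have hXX' : ∀ᶠ t in 𝓝 (0:ℝ), dot4 (X t) (deriv X t) = 0 := by
    filter_upwards [hXunit.eventually_nhds] with t ht
    have h2 : deriv (fun u => dot4 (X u) (X u)) t
        = dot4 (deriv X t) (X t) + dot4 (X t) (deriv X t) :=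
      (hasDerivAt_dot4 X X (hXd t) (hXd t)).deriv
    have he : (fun u => dot4 (X u) (X u)) =ᶠ[𝓝 t] (fun _ => (1:ℝ)) := ht
    rw [he.deriv_eq, deriv_const] at h2
    rw [dot4_comm (deriv X t) (X t)] at h2
    linarith
  have hYX' : ∀ᶠ t in 𝓝 (0:ℝ), dot4 (Y t) (deriv X t) = 0 := by
    filter_upwards [hXY.eventually_nhds, hXY'] with t ht ht'
    have h2 : deriv (fun u => dot4 (X u) (Y u)) t
        = dot4 (deriv X t) (Y t) + dot4 (X t) (deriv Y t) :=
      (hasDerivAt_dot4 X Y (hXd t) (hYd t)).deriv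
    have he : (fun u => dot4 (X u) (Y u)) =ᶠ[𝓝 t] (fun _ => (0:ℝ)) := ht
    rw [he.deriv_eq, deriv_const, ht'] at h2
    rw [dot4_comm (deriv X t) (Y t)] at h2
    linarith
  have hνν : ∀ᶠ t in 𝓝 (0:ℝ),
      dot4 (tcross (X t) (Y t) (deriv X t)) (tcross (X t) (Y t) (deriv X t)) = 1 := by
    filter_upwards [hXunit, hYunit, hXY, hXX', hYX', hX'unit] with t h1 h2 h3 h4 h5 h6
    rw [gram_id, h1, h2, h3, h4, h5, h6]; ring
  -- general formula for the derivative of F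
  have hLgen : ∀ᶠ t in 𝓝 (0:ℝ), ∀ s r : ℝ, ∀ v : ℝ×ℝ×ℝ,
      fderiv ℝ (fun p : ℝ×ℝ×ℝ => γ p.1 + p.2.1 • X p.1 + p.2.2 • Y p.1) (t,s,r) v
        = (b₁ t * v.1 + v.2.1) • X t + (b₂ t * v.1 + v.2.2) • Y t
          + ((b₃ t + s + r * a t) * v.1) • deriv X t := by
    filter_upwards [hγ', hY'] with t h1 h2
    intro s r v
    rw [fderiv_ruled_apply γ X Y hγd hXd hYd t s r v, h1, h2]
    match_scalars <;> ring
  -- coefficient extraction from linear independence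
  have hco : ∀ᶠ t in 𝓝 (0:ℝ), ∀ c1 c2 c3 : ℝ,
      c1 • X t + c2 • Y t + c3 • deriv X t = 0 → c1 = 0 ∧ c2 = 0 ∧ c3 = 0 := by
    filter_upwards [hspan] with t ht
    intro c1 c2 c3 h
    have := Fintype.linearIndependent_iff.mp ht ![c1, c2, c3]
      (by simpa [Fin.sum_univ_three] using h)
    exact ⟨this 0, this 1, this 2⟩
  refine ⟨⟨fun _ => (-1 : ℝ), contDiff_const, ?_⟩, ?_, ?_, ?_, ?_⟩
  · -- identifier
    filter_upwards [hLgen, hνν] with t hL hν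
    intro s r
    refine ⟨by norm_num, ?_⟩
    have h1 : fderiv ℝ (fun p : ℝ×ℝ×ℝ => γ p.1 + p.2.1 • X p.1 + p.2.2 • Y p.1) (t,s,r) (1,0,0)
        = b₁ t • X t + b₂ t • Y t + (b₃ t + s + r * a t) • deriv X t := by
      rw [hL s r (1,0,0)]; match_scalars <;> ring
    have h2 : fderiv ℝ (fun p : ℝ×ℝ×ℝ => γ p.1 + p.2.1 • X p.1 + p.2.2 • Y p.1) (t,s,r) (0,1,0)
        = X t := by rw [hL s r (0,1,0)]; match_scalars <;> ring
    have h3 : fderiv ℝ (fun p : ℝ×ℝ×ℝ => γ p.1 + p.2.1 • X p.1 + p.2.2 • Y p.1) (t,s,r) (0,0,1)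
        = Y t := by rw [hL s r (0,0,1)]; match_scalars <;> ring
    rw [h1, h2, h3, identifier_det, hν]
    show b₃ t + s + r * a t = _
    ring
  · -- kernel
    filter_upwards [hLgen, hco] with t hL hc
    intro s r hl
    replace hl : b₃ t + s + r * a t = 0 := hl
    apply Submodule.ext
    intro v
    rw [LinearMap.mem_ker, Submodule.mem_span_singleton]
    have hv : (fderiv ℝ (fun p : ℝ×ℝ×ℝ => γ p.1 + p.2.1 • X p.1 + p.2.2 • Y p.1)
        (t,s,r)).toLinearMap v
        = (b₁ t * v.1 + v.2.1) • X t + (b₂ t * v.1 + v.2.2) • Y t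
          + ((b₃ t + s + r * a t) * v.1) • deriv X t := hL s r v
    constructor
    · intro h
      rw [hv] at h
      obtain ⟨hc1, hc2, -⟩ := hc _ _ _ h
      refine ⟨v.1, ?_⟩
      have : v.1 • ((1:ℝ), -b₁ t, -b₂ t) = (v.1 * 1, v.1 * -b₁ t, v.1 * -b₂ t) := rfl
      rw [this]
      obtain ⟨v1, v2, v3⟩ := v
      simp only [Prod.mk.injEq]
      refine ⟨by ring, by dsimp only at hc1 ⊢; linarith, by dsimp only at hc2 ⊢; linarith⟩
    · rintro ⟨c, rfl⟩
      rw [map_smul]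
      have hη : (fderiv ℝ (fun p : ℝ×ℝ×ℝ => γ p.1 + p.2.1 • X p.1 + p.2.2 • Y p.1)
          (t,s,r)).toLinearMap ((1:ℝ), -b₁ t, -b₂ t) = 0 := by
        rw [show ((fderiv ℝ (fun p : ℝ×ℝ×ℝ => γ p.1 + p.2.1 • X p.1 + p.2.2 • Y p.1)
          (t,s,r)).toLinearMap ((1:ℝ), -b₁ t, -b₂ t))
          = (b₁ t * 1 + -b₁ t) • X t + (b₂ t * 1 + -b₂ t) • Y t
            + ((b₃ t + s + r * a t) * 1) • deriv X t from hL s r (1, -b₁ t, -b₂ t)]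
        rw [hl]
        match_scalars <;> ring
      rw [hη, smul_zero]
  · -- singular set
    filter_upwards [hLgen, hspan] with t hL ht
    intro s r
    show _ ↔ b₃ t + s + r * a t = 0
    by_cases hl : b₃ t + s + r * a t = 0
    · refine iff_of_true ?_ hl
      unfold IsSingAt
      have li2 : LinearIndependent ℝ ![X t, Y t] := by
        have hcomp : (![X t, Y t, deriv X t] ∘ ![(0:Fin 3), 1]) = ![X t, Y t] := by
          funext i; fin_cases i <;> rfl
        rw [← hcomp]
        exact ht.comp ![(0:Fin 3), 1] (by decide)
      have hsub : LinearMap.range (fderiv ℝ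
          (fun p : ℝ×ℝ×ℝ => γ p.1 + p.2.1 • X p.1 + p.2.2 • Y p.1) (t,s,r)).toLinearMap
          ≤ Submodule.span ℝ (Set.range ![X t, Y t]) := by
        rintro x ⟨v, rfl⟩
        rw [show (fderiv ℝ (fun p : ℝ×ℝ×ℝ => γ p.1 + p.2.1 • X p.1 + p.2.2 • Y p.1)
            (t,s,r)).toLinearMap v
            = (b₁ t * v.1 + v.2.1) • X t + (b₂ t * v.1 + v.2.2) • Y t
              + ((b₃ t + s + r * a t) * v.1) • deriv X t from hL s r v, hl]
        have hz : ((0:ℝ) * v.1) • deriv X t = 0 := by simp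
        rw [hz, add_zero]
        exact Submodule.add_mem _
          (Submodule.smul_mem _ _ (Submodule.subset_span ⟨0, rfl⟩))
          (Submodule.smul_mem _ _ (Submodule.subset_span ⟨1, rfl⟩))
      have h2 : Module.finrank ℝ (Submodule.span ℝ (Set.range ![X t, Y t])) = 2 := by
        rw [finrank_span_eq_card li2]; simp
      have := Submodule.finrank_mono hsub
      omega
    · refine iff_of_false ?_ hl
      intro hsing
      unfold IsSingAt at hsing
      set q := (b₃ t + s + r * a t)⁻¹ with hq
      have hsub : Submodule.span ℝ (Set.range ![X t, Y t, deriv X t])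
          ≤ LinearMap.range (fderiv ℝ
            (fun p : ℝ×ℝ×ℝ => γ p.1 + p.2.1 • X p.1 + p.2.2 • Y p.1) (t,s,r)).toLinearMap := by
        rw [Submodule.span_le]
        rintro x ⟨i, rfl⟩
        fin_cases i
        · refine LinearMap.mem_range.mpr ⟨((0:ℝ),1,0), ?_⟩
          rw [show (fderiv ℝ (fun p : ℝ×ℝ×ℝ => γ p.1 + p.2.1 • X p.1 + p.2.2 • Y p.1)
              (t,s,r)).toLinearMap ((0:ℝ),1,0)
              = (b₁ t * 0 + 1) • X t + (b₂ t * 0 + 0) • Y t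
                + ((b₃ t + s + r * a t) * 0) • deriv X t from hL s r ((0:ℝ),1,0)]
          show _ = X t
          match_scalars <;> ring
        · refine LinearMap.mem_range.mpr ⟨((0:ℝ),0,1), ?_⟩
          rw [show (fderiv ℝ (fun p : ℝ×ℝ×ℝ => γ p.1 + p.2.1 • X p.1 + p.2.2 • Y p.1)
              (t,s,r)).toLinearMap ((0:ℝ),0,1)
              = (b₁ t * 0 + 0) • X t + (b₂ t * 0 + 1) • Y t
                + ((b₃ t + s + r * a t) * 0) • deriv X t from hL s r ((0:ℝ),0,1)]
          show _ = Y t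
          match_scalars <;> ring
        · refine LinearMap.mem_range.mpr ⟨(q, -(q * b₁ t), -(q * b₂ t)), ?_⟩
          rw [show (fderiv ℝ (fun p : ℝ×ℝ×ℝ => γ p.1 + p.2.1 • X p.1 + p.2.2 • Y p.1)
              (t,s,r)).toLinearMap (q, -(q * b₁ t), -(q * b₂ t))
              = (b₁ t * q + -(q * b₁ t)) • X t + (b₂ t * q + -(q * b₂ t)) • Y t
                + ((b₃ t + s + r * a t) * q) • deriv X t from hL s r _]
          show _ = deriv X t
          have hmul : (b₃ t + s + r * a t) * q = 1 := mul_inv_cancel₀ hl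
          rw [hmul]
          match_scalars <;> ring
      have h3 := Submodule.finrank_mono hsub
      rw [finrank_span_eq_card ht] at h3
      simp at h3
      omega
  · -- striction surface
    filter_upwards [] with t
    constructor
    · intro s r hl
      replace hl : b₃ t + s + r * a t = 0 := hl
      refine ⟨r, ?_⟩
      show γ t + s • X t + r • Y t = _
      have hs : s = -(a t) * r - b₃ t := by linarith
      rw [hs]
    · intro k
      refine ⟨-(b₃ t) - k * a t, k, ?_, ?_⟩
      · show b₃ t + (-(b₃ t) - k * a t) + k * a t = 0
        ring
      · show _ = γ t + (-(b₃ t) - k * a t) • X t + k • Y t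
        match_scalars <;> ring
  · -- second singular set
    intro haa
    filter_upwards [haa, hXunit, hYunit, hXY] with t h'a hXu hYu hXYo
    intro s r
    have hηl : fderiv ℝ (fun p : ℝ×ℝ×ℝ => b₃ p.1 + p.2.1 + p.2.2 * a p.1) (t,s,r)
        ((1:ℝ), -b₁ t, -b₂ t) = deriv b₃ t + r * deriv a t - b₁ t - a t * b₂ t := by
      rw [fderiv_lam_apply a b₃ had hb₃d t s r]
      show (deriv b₃ t + r * deriv a t) * 1 + -b₁ t + a t * -b₂ t = _
      ring
    have hiff : ((b₃ t + s + r * a t = 0 ∧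
        deriv b₃ t + r * deriv a t - b₁ t - a t * b₂ t = 0) ↔
        (r = (a t * b₂ t + b₁ t - deriv b₃ t) / deriv a t ∧
          s = -(b₃ t) - a t * (a t * b₂ t + b₁ t - deriv b₃ t) / deriv a t)) := by
      constructor
      · rintro ⟨h0, h1⟩
        have hr : r = (a t * b₂ t + b₁ t - deriv b₃ t) / deriv a t := by
          rw [eq_div_iff h'a]; linarith
        refine ⟨hr, ?_⟩
        rw [show s = -(b₃ t) - r * a t by linarith, hr]
        ring
      · rintro ⟨hr, hs⟩
        subst hr
        subst hs
        constructor
        · field_simp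
          try ring
        · field_simp
          try ring
    constructor
    · show ((b₃ t + s + r * a t = 0 ∧ _) ↔ _)
      rw [hηl]
      exact hiff
    · intro hcond
      obtain ⟨hr, hs⟩ := hiff.mp ⟨hcond.1, by rw [← hηl]; exact hcond.2⟩
      subst hr
      subst hs
      have hQ : dot4 (-(a t) • X t + Y t) (-(a t) • X t + Y t) = (a t)^2 + 1 := by
        rw [dot4_sq_comb, hXu, hYu, hXYo]; ring
      show γ t + _ • X t + _ • Y t = γ t - b₃ t • X t + _ • _ • (-(a t) • X t + Y t)
      rw [hQ, smul_smul]
      have hsq : Real.sqrt ((a t)^2 + 1) ≠ 0 := by positivity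
      have hc2 : ((a t * b₂ t + b₁ t - deriv b₃ t) * Real.sqrt ((a t)^2 + 1) / deriv a t)
          * (Real.sqrt ((a t)^2 + 1))⁻¹ = (a t * b₂ t + b₁ t - deriv b₃ t) / deriv a t := by
        field_simp
      rw [hc2]
      match_scalars
      · ring
      · field_simp
        try ring
      · field_simp
        try ring
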